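/- arXiv:2307.13928 — 4 statements merged into one kernel-verified Lean document; each statement's English description precedes it below -/
import Mathlib

section
/- For any game Γ and exploration rates T_1,...,T_N > 0, every Quantal Response Equilibrium of Γ is a (max_k T_k)(max_k ln n_k)-approximate Nash equilibrium of Γ. -/
/-!
At a QRE, player `k` plays the softmax `p_k` of `r_k / T_k`. Each `exp (r_{ki} / T_k)` is at most the
partition function `Z`, so any deviation `y` earns at most `T_k log Z`, while by Gibbs' identity
`p_k` itself earns `T_k log Z - T_k H(p_k)`. The entropy `H(p_k)` is at most `ln n_k` by Jensen's
inequality for the concave function `-x log x`.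
-/

open Function

/-- A mixed strategy: a point of the probability simplex. -/
def IsSimplex {n : ℕ} (x : Fin n → ℝ) : Prop :=
  (∀ i, 0 ≤ x i) ∧ ∑ i, x i = 1

open Real Finset

lemma nonempty_of_sum_eq_one {ι : Type*} [Fintype ι] {y : ι → ℝ} (hy₁ : ∑ i, y i = 1) :
    Nonempty ι :=
  univ_nonempty_iff.mp (nonempty_of_sum_ne_zero (hy₁ ▸ one_ne_zero))

namespace Real

lemma sum_negMulLog_le_log_card {ι : Type*} [Fintype ι] {x : ι → ℝ} (hx₀ : ∀ i, 0 ≤ x i)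
    (hx₁ : ∑ i, x i = 1) : ∑ i, negMulLog (x i) ≤ log (Fintype.card ι) := by
  have := nonempty_of_sum_eq_one hx₁
  have hw : (0 : ℝ) < (Fintype.card ι : ℝ)⁻¹ := by positivity
  have jensen := concaveOn_negMulLog.le_map_sum (t := univ) (w := fun _ ↦ (Fintype.card ι : ℝ)⁻¹)
    (p := x) (fun _ _ ↦ hw.le) (by simp) (fun i _ ↦ hx₀ i)
  rw [← smul_sum, ← smul_sum, hx₁, smul_eq_mul, smul_eq_mul, mul_one, negMulLog, log_inv,
    neg_mul_neg] at jensen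
  exact le_of_mul_le_mul_left jensen hw

end Real

noncomputable def softmax {ι : Type*} [Fintype ι] (a : ι → ℝ) : ι → ℝ :=
  fun i ↦ exp (a i) / ∑ j, exp (a j)

section Softmax

variable {ι : Type*} [Fintype ι]

lemma sum_exp_pos [Nonempty ι] (a : ι → ℝ) : 0 < ∑ j, exp (a j) :=
  sum_pos (fun j _ ↦ exp_pos (a j)) univ_nonempty

lemma softmax_pos [Nonempty ι] (a : ι → ℝ) (i : ι) : 0 < softmax a i :=
  div_pos (exp_pos (a i)) (sum_exp_pos a)

lemma log_softmax [Nonempty ι] (a : ι → ℝ) (i : ι) :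
    log (softmax a i) = a i - log (∑ j, exp (a j)) := by
  rw [softmax, log_div (exp_pos _).ne' (sum_exp_pos a).ne', log_exp]

lemma sum_softmax [Nonempty ι] (a : ι → ℝ) : ∑ i, softmax a i = 1 := by
  simp only [softmax, ← sum_div, div_self (sum_exp_pos a).ne']

lemma sum_mul_le_log_sum_exp {y : ι → ℝ} (hy₀ : ∀ i, 0 ≤ y i) (hy₁ : ∑ i, y i = 1)
    (a : ι → ℝ) : ∑ i, y i * a i ≤ log (∑ j, exp (a j)) := by
  have := nonempty_of_sum_eq_one hy₁
  have ha : ∀ i, a i ≤ log (∑ j, exp (a j)) := fun i ↦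
    (le_log_iff_exp_le (sum_exp_pos a)).mpr
      (single_le_sum (fun j _ ↦ (exp_pos (a j)).le) (mem_univ i))
  calc ∑ i, y i * a i ≤ ∑ i, y i * log (∑ j, exp (a j)) :=
        sum_le_sum fun i _ ↦ mul_le_mul_of_nonneg_left (ha i) (hy₀ i)
    _ = log (∑ j, exp (a j)) := by rw [← sum_mul, hy₁, one_mul]

lemma sum_softmax_mul_add_sum_negMulLog [Nonempty ι] (a : ι → ℝ) :
    ∑ i, softmax a i * a i + ∑ i, negMulLog (softmax a i) = log (∑ j, exp (a j)) := by
  simp only [negMulLog, log_softmax, ← sum_add_distrib]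
  calc ∑ i, (softmax a i * a i + -softmax a i * (a i - log (∑ j, exp (a j))))
      = (∑ i, softmax a i) * log (∑ j, exp (a j)) := by rw [sum_mul]; congr! 1 with i; ring
    _ = log (∑ j, exp (a j)) := by rw [sum_softmax, one_mul]

lemma sum_mul_le_sum_softmax_mul_add_mul_log_card {y : ι → ℝ} (hy₀ : ∀ i, 0 ≤ y i)
    (hy₁ : ∑ i, y i = 1) (r : ι → ℝ) {T : ℝ} (hT : 0 < T) :
    ∑ i, y i * r i ≤ ∑ i, softmax (fun j ↦ r j / T) i * r i + T * log (Fintype.card ι) := by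
  have := nonempty_of_sum_eq_one hy₁
  set a : ι → ℝ := fun j ↦ r j / T
  have hr : ∀ i, r i = T * a i := fun i ↦ by simp only [a]; field_simp
  simp only [hr, mul_left_comm _ T, ← mul_sum]
  calc T * ∑ i, y i * a i ≤ T * log (∑ j, exp (a j)) :=
        mul_le_mul_of_nonneg_left (sum_mul_le_log_sum_exp hy₀ hy₁ a) hT.le
    _ = T * ∑ i, softmax a i * a i + T * ∑ i, negMulLog (softmax a i) := by
        rw [← mul_add, sum_softmax_mul_add_sum_negMulLog]
    _ ≤ T * ∑ i, softmax a i * a i + T * log (Fintype.card ι) := by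
        gcongr
        exact sum_negMulLog_le_log_card (fun i ↦ (softmax_pos a i).le) (sum_softmax a)

end Softmax

theorem qre_is_approx_nash_general {N : ℕ} {n : Fin N → ℕ}
    -- rewards: `r x k` is the reward vector of player `k`, depending only on `x_{-k}`
    (r : (∀ l, Fin (n l) → ℝ) → ∀ k, Fin (n k) → ℝ)
    (hr : ∀ (k : Fin N) (x : ∀ l, Fin (n l) → ℝ) (y : Fin (n k) → ℝ),
      r (update x k y) k = r x k)
    -- payoffs are linear in own strategy: `u_k(x) = ⟨x_k, r_k(x_{-k})⟩`
    (u : (∀ l, Fin (n l) → ℝ) → Fin N → ℝ)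
    (hu : ∀ x k, u x k = ∑ i, x k i * r x k i)
    (T : Fin N → ℝ) (hT : ∀ k, 0 < T k)
    (p : ∀ l, Fin (n l) → ℝ)
    -- `p` is a QRE of `Γ`:
    (hQRE : ∀ (k : Fin N) (i : Fin (n k)),
      p k i = Real.exp (r p k i / T k) / ∑ j, Real.exp (r p k j / T k)) :
    -- `p` is a `(max_k T_k)(max_k ln n_k)`-approximate Nash equilibrium of `Γ`:
    ∀ (k : Fin N) (y : Fin (n k) → ℝ), IsSimplex y →
      u (update p k y) k ≤ u p k + (⨆ k, T k) * (⨆ k, Real.log (n k)) := by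
  intro k y ⟨hy₀, hy₁⟩
  have hp : p k = softmax (fun i ↦ r p k i / T k) := funext (hQRE k)
  have hT_le : T k ≤ ⨆ k, T k := le_ciSup (Set.finite_range T).bddAbove k
  have hlog_le : log (n k) ≤ ⨆ k, log (n k) :=
    le_ciSup (f := fun k ↦ log (n k)) (Set.finite_range _).bddAbove k
  calc u (update p k y) k = ∑ i, y i * r p k i := by rw [hu]; simp only [update_self, hr]
    _ ≤ ∑ i, p k i * r p k i + T k * log (n k) := by
        simpa only [← hp, Fintype.card_fin] using
          sum_mul_le_sum_softmax_mul_add_mul_log_card hy₀ hy₁ (r p k) (hT k)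
    _ ≤ u p k + (⨆ k, T k) * ⨆ k, log (n k) := by
        rw [hu]
        gcongr
        exact (hT k).le.trans hT_le

/-- Every Quantal Response Equilibrium of a game `Γ` is a
`(max_k T_k)(max_k ln n_k)`-approximate Nash equilibrium of `Γ`. -/
theorem qre_is_approx_nash {N : ℕ} (hN : 0 < N) {n : Fin N → ℕ}
    -- rewards: `r x k` is the reward vector of player `k`, depending only on `x_{-k}`
    (r : (∀ l, Fin (n l) → ℝ) → ∀ k, Fin (n k) → ℝ)
    (hr : ∀ (k : Fin N) (x : ∀ l, Fin (n l) → ℝ) (y : Fin (n k) → ℝ),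
      r (update x k y) k = r x k)
    -- payoffs are linear in own strategy: `u_k(x) = ⟨x_k, r_k(x_{-k})⟩`
    (u : (∀ l, Fin (n l) → ℝ) → Fin N → ℝ)
    (hu : ∀ x k, u x k = ∑ i, x k i * r x k i)
    (T : Fin N → ℝ) (hT : ∀ k, 0 < T k)
    (p : ∀ l, Fin (n l) → ℝ) (hp : ∀ l, IsSimplex (p l))
    -- `p` is a QRE of `Γ`:
    (hQRE : ∀ (k : Fin N) (i : Fin (n k)),
      p k i = Real.exp (r p k i / T k) / ∑ j, Real.exp (r p k j / T k)) :
    -- `p` is a `(max_k T_k)(max_k ln n_k)`-approximate Nash equilibrium of `Γ`: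
    ∀ (k : Fin N) (y : Fin (n k) → ℝ), IsSimplex y →
      u (update p k y) k ≤ u p k + (⨆ k, T k) * (⨆ k, Real.log (n k)) :=
  qre_is_approx_nash_general r hr u hu T hT p hQRE
end

section
/- In a network zero-sum game with reward vectors z_k(x_{-k}) = Σ_{(k,l)∈E} A^{kl} x_l satisfying Σ_k ⟨x_k, z_k(x_{-k})⟩ = 0 for all x ∈ Δ, it holds for any two joint strategies x, p ∈ Δ that Σ_k (x_k − p_k)ᵀ[z_k(x_{-k}) − z_k(p_{-k})] = 0. -/
/-- The reward vector of player `k` in a network game. -/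
def netReward {N : ℕ} {n : Fin N → ℕ} (E : Finset (Fin N × Fin N))
    (A : ∀ k l : Fin N, Matrix (Fin (n k)) (Fin (n l)) ℝ)
    (x : ∀ l, Fin (n l) → ℝ) (k : Fin N) (i : Fin (n k)) : ℝ :=
  ∑ l ∈ Finset.univ.filter (fun l => (k, l) ∈ E), ∑ j, A k l i j * x l j

lemma netReward_mid {N : ℕ} {n : Fin N → ℕ} (E : Finset (Fin N × Fin N))
    (A : ∀ k l : Fin N, Matrix (Fin (n k)) (Fin (n l)) ℝ)
    (x p : ∀ l, Fin (n l) → ℝ) (k : Fin N) (i : Fin (n k)) :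
    netReward E A (fun l j => (x l j + p l j) / 2) k i
      = (netReward E A x k i + netReward E A p k i) / 2 := by
  simp only [netReward]
  rw [← Finset.sum_add_distrib, Finset.sum_div]
  refine Finset.sum_congr rfl fun l _ => ?_
  rw [← Finset.sum_add_distrib, Finset.sum_div]
  refine Finset.sum_congr rfl fun j _ => ?_
  ring

/-- In a network zero-sum game, `Σ_k (x_k − p_k)ᵀ[z_k(x_{-k}) − z_k(p_{-k})] = 0`
for any two joint mixed strategies `x, p`. -/
theorem nzsg_cancellation {N : ℕ} {n : Fin N → ℕ}
    (E : Finset (Fin N × Fin N))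
    (A : ∀ k l : Fin N, Matrix (Fin (n k)) (Fin (n l)) ℝ)
    -- zero-sum on all joint mixed strategies:
    (hzs : ∀ x : ∀ l, Fin (n l) → ℝ, (∀ l, IsSimplex (x l)) →
      ∑ k, ∑ i, x k i * netReward E A x k i = 0)
    (x p : ∀ l, Fin (n l) → ℝ)
    (hx : ∀ l, IsSimplex (x l)) (hp : ∀ l, IsSimplex (p l)) :
    ∑ k, ∑ i, (x k i - p k i) * (netReward E A x k i - netReward E A p k i) = 0 := by
  have hm : ∀ l, IsSimplex (fun j => (x l j + p l j) / 2) := by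
    intro l
    refine ⟨fun j => by have := (hx l).1 j; have := (hp l).1 j; linarith, ?_⟩
    rw [← Finset.sum_div, Finset.sum_add_distrib, (hx l).2, (hp l).2]
    norm_num
  have h1 := hzs x hx
  have h2 := hzs p hp
  have h3 := hzs _ hm
  simp only [netReward_mid] at h3
  have key : ∑ k, ∑ i, (x k i - p k i) * (netReward E A x k i - netReward E A p k i)
      = ∑ k, ∑ i, (2 * (x k i * netReward E A x k i) + 2 * (p k i * netReward E A p k i)
        - 4 * ((x k i + p k i) / 2 * ((netReward E A x k i + netReward E A p k i) / 2))) := by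
    refine Finset.sum_congr rfl fun k _ => Finset.sum_congr rfl fun i _ => ?_
    ring
  rw [key]
  simp only [Finset.sum_sub_distrib, Finset.sum_add_distrib, ← Finset.mul_sum, h1, h2, h3]
  ring
end

section
/- Let Z be a network zero-sum game with unique QRE p for exploration rates T_k > 0, and G a game with d(Z,G) ≤ δ. If x(t) evolves under the Q-learning dynamics for G, then whenever N δ / T_min < D_KL(p‖x(t)) + D_KL(x(t)‖p) (with T_min = min_k T_k), the function t ↦ D_KL(p‖x(t)) is strictly decreasing at t. -/
open Function

/-! Along the Q-learning flow, `d/dt D_KL(p_k‖x_k) = (x_k - p_k)·(r_k(x) - T_k log x_k)`.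
Replacing `r_k` by the zero-sum rewards `z_k` costs at most `δ` per player; the zero-sum property
makes `∑_k (x_k - p_k)·(z_k(x) - z_k(p))` vanish (polarize `∑_k x_k·z_k(x) = 0` at the midpoint of
`x` and `p`), and at the QRE `z_k(p) - T_k log p_k` is constant in each player's actions. What is
left is `Nδ - ∑_k T_k (x_k - p_k)·(log x_k - log p_k) ≤ Nδ - T_min (D_KL(p‖x) + D_KL(x‖p))`,
which is negative outside the trapping region. -/

open Real Finset

section RelEntropy

variable {ι : Type*} [Fintype ι]

noncomputable def relEntropy (p q : ι → ℝ) : ℝ := ∑ i, p i * log (p i / q i)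

theorem hasDerivAt_relEntropy_of_hasDerivAt {p : ι → ℝ} {y : ℝ → ι → ℝ} {g : ι → ℝ} {t : ℝ}
    (hp : ∀ i, 0 < p i) (hy : ∀ s i, 0 < y s i)
    (hderiv : ∀ i, HasDerivAt (fun s => y s i) (y t i * g i) t) :
    HasDerivAt (fun s => relEntropy p (y s)) (-∑ i, p i * g i) t := by
  unfold relEntropy
  rw [← sum_neg_distrib]
  refine HasDerivAt.fun_sum fun i _ => ?_
  have hlog : (fun s => p i * log (p i / y s i)) = fun s => p i * (log (p i) - log (y s i)) := by
    funext s
    rw [log_div (hp i).ne' (hy s i).ne']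
  rw [hlog]
  have h := (((hderiv i).log (hy t i).ne').const_sub (log (p i))).const_mul (p i)
  rwa [mul_div_cancel_left₀ _ (hy t i).ne', mul_neg] at h

theorem sum_sub_mul_log_sub_log_nonneg {p q : ι → ℝ} (hp : ∀ i, 0 < p i) (hq : ∀ i, 0 < q i) :
    0 ≤ ∑ i, (q i - p i) * (log (q i) - log (p i)) :=
  sum_nonneg fun i _ => by
    simpa [mul_comm] using (monovaryOn_id_iff.2 strictMonoOn_log.monotoneOn).sub_mul_sub_nonneg
      (Set.mem_Ioi.2 (hp i)) (Set.mem_Ioi.2 (hq i))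

theorem relEntropy_add_relEntropy {p q : ι → ℝ} (hp : ∀ i, 0 < p i) (hq : ∀ i, 0 < q i) :
    relEntropy p q + relEntropy q p = ∑ i, (q i - p i) * (log (q i) - log (p i)) := by
  unfold relEntropy
  rw [← sum_add_distrib]
  refine sum_congr rfl fun i _ => ?_
  rw [log_div (hp i).ne' (hq i).ne', log_div (hq i).ne' (hp i).ne']
  ring

end RelEntropy

section Player

variable {ι : Type*} [Fintype ι]

theorem sum_mul_sub_sum_mul_eq {p x v : ι → ℝ} (hp : ∑ i, p i = 1) :
    ∑ i, p i * (v i - ∑ j, x j * v j) = ∑ i, (p i - x i) * v i := by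
  simp only [mul_sub, sub_mul, sum_sub_distrib, ← sum_mul, hp, one_mul]

theorem sum_mul_qLearningField_eq {p x r : ι → ℝ} (T : ℝ) (hp : ∑ i, p i = 1)
    (hx : ∑ i, x i = 1) (hxpos : ∀ i, 0 < x i) :
    ∑ i, p i * (r i - ∑ j, x j * r j + T * ∑ j, x j * log (x j / x i)) =
      ∑ i, (p i - x i) * (r i - T * log (x i)) := by
  rw [← sum_mul_sub_sum_mul_eq hp]
  refine sum_congr rfl fun i _ => ?_
  have hlog : ∑ j, x j * log (x j / x i) = ∑ j, x j * log (x j) - log (x i) := by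
    simp only [log_div (hxpos _).ne' (hxpos i).ne', mul_sub, sum_sub_distrib, ← sum_mul, hx,
      one_mul]
  have hv : ∑ j, x j * (r j - T * log (x j)) = ∑ j, x j * r j - T * ∑ j, x j * log (x j) := by
    simp only [mul_sub, sum_sub_distrib, mul_left_comm _ T, ← mul_sum]
  rw [hlog, hv]
  ring

theorem sum_sub_mul_sub_log_eq_zero_of_softmax {p x z : ι → ℝ} {T : ℝ} (hT : T ≠ 0)
    (hp : ∀ i, p i = exp (z i / T) / ∑ j, exp (z j / T)) (hxp : ∑ i, x i = ∑ i, p i) :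
    ∑ i, (x i - p i) * (z i - T * log (p i)) = 0 := by
  have hconst : ∀ i, z i - T * log (p i) = T * log (∑ j, exp (z j / T)) := fun i => by
    have hS : 0 < ∑ j, exp (z j / T) := sum_pos (fun j _ => exp_pos _) ⟨i, mem_univ i⟩
    rw [hp i, log_div (exp_pos _).ne' hS.ne', log_exp]
    field_simp
    ring
  simp only [hconst, ← sum_mul, sum_sub_distrib, hxp, sub_self, zero_mul]

theorem sum_sub_mul_le_of_abs_sub_le {a b x y : ι → ℝ} {δ : ℝ}
    (h : |(∑ i, y i * a i) - (∑ i, x i * a i) - ((∑ i, y i * b i) - ∑ i, x i * b i)| ≤ δ) :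
    ∑ i, (x i - y i) * b i ≤ δ + ∑ i, (x i - y i) * a i := by
  simp only [sub_mul, sum_sub_distrib]
  linarith [(abs_le.1 h).2]

theorem sum_sub_mul_sub_log_le_of_softmax {p x a b c : ι → ℝ} {T δ : ℝ} (hT : T ≠ 0)
    (hmpd : |(∑ i, p i * a i) - (∑ i, x i * a i) - ((∑ i, p i * b i) - ∑ i, x i * b i)| ≤ δ)
    (hp : ∀ i, p i = exp (c i / T) / ∑ j, exp (c j / T)) (hxp : ∑ i, x i = ∑ i, p i) :
    ∑ i, (x i - p i) * (b i - T * log (x i)) ≤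
      δ + ∑ i, (x i - p i) * (a i - c i) - T * ∑ i, (x i - p i) * (log (x i) - log (p i)) := by
  have hab := sum_sub_mul_le_of_abs_sub_le hmpd
  have hc := sum_sub_mul_sub_log_eq_zero_of_softmax hT hp hxp
  simp only [mul_sub, sum_sub_distrib, mul_left_comm _ T, ← mul_sum] at hab hc ⊢
  linarith

end Player

theorem lt_sum_mul_of_div_iInf_lt {κ : Type*} [Fintype κ] [Nonempty κ] {T J : κ → ℝ} {c : ℝ}
    (hT : ∀ k, 0 < T k) (hJ : ∀ k, 0 ≤ J k) (h : c / (⨅ k, T k) < ∑ k, J k) :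
    c < ∑ k, T k * J k := by
  obtain ⟨k₀, hk₀⟩ := exists_eq_ciInf_of_finite (f := T)
  have hmin : 0 < ⨅ k, T k := hk₀ ▸ hT k₀
  calc c < (⨅ k, T k) * ∑ k, J k := (div_lt_iff₀' hmin).1 h
    _ ≤ ∑ k, T k * J k := by
      rw [mul_sum]
      exact sum_le_sum fun k _ =>
        mul_le_mul_of_nonneg_right (ciInf_le (Finite.bddBelow_range T) k) (hJ k)

theorem hasDerivAt_relEntropy_qLearning {ι : Type*} [Fintype ι] {p : ι → ℝ} {x : ℝ → ι → ℝ}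
    {r : ι → ℝ} {T t : ℝ} (hp : ∀ i, 0 < p i) (hpsum : ∑ i, p i = 1) (hx : ∀ s i, 0 < x s i)
    (hxsum : ∑ i, x t i = 1)
    (hdyn : ∀ i, HasDerivAt (fun s => x s i)
      (x t i * (r i - ∑ j, x t j * r j + T * ∑ j, x t j * log (x t j / x t i))) t) :
    HasDerivAt (fun s => relEntropy p (x s)) (∑ i, (x t i - p i) * (r i - T * log (x t i))) t := by
  have h := hasDerivAt_relEntropy_of_hasDerivAt hp hx hdyn
  rw [sum_mul_qLearningField_eq T hpsum hxsum (hx t), ← sum_neg_distrib] at h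
  simpa only [← neg_mul, neg_sub] using h

section NetworkGame

variable {N : ℕ} {n : Fin N → ℕ} (E : Finset (Fin N × Fin N))
  (A : ∀ k l : Fin N, Matrix (Fin (n k)) (Fin (n l)) ℝ)

def netPayoff (x y : ∀ l, Fin (n l) → ℝ) : ℝ :=
  ∑ k, ∑ i, x k i * netReward E A y k i

theorem netReward_add_smul (a b : ℝ) (x y : ∀ l, Fin (n l) → ℝ) (k : Fin N) (i : Fin (n k)) :
    netReward E A (a • x + b • y) k i = a * netReward E A x k i + b * netReward E A y k i := by
  simp only [netReward, Pi.add_apply, Pi.smul_apply, smul_eq_mul, mul_add, mul_sum,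
    ← sum_add_distrib]
  refine sum_congr rfl fun l _ => sum_congr rfl fun j _ => ?_
  ring

theorem netPayoff_add_smul_self (a b : ℝ) (x y : ∀ l, Fin (n l) → ℝ) :
    netPayoff E A (a • x + b • y) (a • x + b • y) =
      a ^ 2 * netPayoff E A x x + a * b * (netPayoff E A x y + netPayoff E A y x) +
        b ^ 2 * netPayoff E A y y := by
  simp only [netPayoff, netReward_add_smul, Pi.add_apply, Pi.smul_apply, smul_eq_mul, mul_add,
    mul_sum, ← sum_add_distrib]
  refine sum_congr rfl fun k _ => sum_congr rfl fun i _ => ?_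
  ring

variable {E A}

theorem netPayoff_add_netPayoff_swap_eq_zero
    (hzs : ∀ x : ∀ l, Fin (n l) → ℝ, (∀ l, IsSimplex (x l)) → netPayoff E A x x = 0)
    {x y : ∀ l, Fin (n l) → ℝ} (hx : ∀ l, IsSimplex (x l)) (hy : ∀ l, IsSimplex (y l)) :
    netPayoff E A x y + netPayoff E A y x = 0 := by
  have hmid : ∀ l, IsSimplex (((1 / 2 : ℝ) • x + (1 / 2 : ℝ) • y) l) := fun l =>
    convex_stdSimplex ℝ (Fin (n l)) (hx l) (hy l) (by norm_num) (by norm_num) (by norm_num)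
  have h := hzs _ hmid
  rw [netPayoff_add_smul_self, hzs x hx, hzs y hy] at h
  linarith

theorem sum_sub_mul_netReward_sub_eq_zero
    (hzs : ∀ x : ∀ l, Fin (n l) → ℝ, (∀ l, IsSimplex (x l)) → netPayoff E A x x = 0)
    {x y : ∀ l, Fin (n l) → ℝ} (hx : ∀ l, IsSimplex (x l)) (hy : ∀ l, IsSimplex (y l)) :
    ∑ k, ∑ i, (x k i - y k i) * (netReward E A x k i - netReward E A y k i) = 0 := by
  have h := netPayoff_add_netPayoff_swap_eq_zero hzs hx hy
  have hexp : ∑ k, ∑ i, (x k i - y k i) * (netReward E A x k i - netReward E A y k i) =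
      netPayoff E A x x - netPayoff E A x y - netPayoff E A y x + netPayoff E A y y := by
    simp only [netPayoff, ← sum_sub_distrib, ← sum_add_distrib]
    refine sum_congr rfl fun k _ => sum_congr rfl fun i _ => ?_
    ring
  rw [hexp, hzs x hx, hzs y hy]
  linarith

end NetworkGame

theorem KL_strictly_decreasing_near_nzsg_general {N : ℕ} (hN : 0 < N) {n : Fin N → ℕ}
    -- the network zero-sum game `Z`:
    (E : Finset (Fin N × Fin N))
    (A : ∀ k l : Fin N, Matrix (Fin (n k)) (Fin (n l)) ℝ)
    (hzs : ∀ x : ∀ l, Fin (n l) → ℝ, (∀ l, IsSimplex (x l)) →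
      ∑ k, ∑ i, x k i * netReward E A x k i = 0)
    -- the game `G`, given by reward functions depending only on opponents' strategies:
    (r : (∀ l, Fin (n l) → ℝ) → ∀ k, Fin (n k) → ℝ)
    -- `d(Z, G) ≤ δ`:
    (δ : ℝ)
    (hd : ∀ (k : Fin N) (x : ∀ l, Fin (n l) → ℝ) (y : Fin (n k) → ℝ),
      (∀ l, IsSimplex (x l)) → IsSimplex y →
      |(∑ i, y i * netReward E A x k i) - (∑ i, x k i * netReward E A x k i) -
        ((∑ i, y i * r x k i) - (∑ i, x k i * r x k i))| ≤ δ)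
    -- exploration rates:
    (T : Fin N → ℝ) (hT : ∀ k, 0 < T k)
    -- `p` is the unique QRE of `Z`:
    (p : ∀ l, Fin (n l) → ℝ) (hpPos : ∀ k i, 0 < p k i) (hp : ∀ l, IsSimplex (p l))
    (hQRE : ∀ (k : Fin N) (i : Fin (n k)),
      p k i = Real.exp (netReward E A p k i / T k) /
        ∑ j, Real.exp (netReward E A p k j / T k))
    -- a trajectory of the Q-learning dynamics on `G`:
    (x : ℝ → ∀ l, Fin (n l) → ℝ)
    (hxPos : ∀ s k i, 0 < x s k i) (hxS : ∀ s l, IsSimplex (x s l))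
    (hdyn : ∀ (s : ℝ) (k : Fin N) (i : Fin (n k)),
      HasDerivAt (fun τ => x τ k i)
        (x s k i * (r (x s) k i - (∑ j, x s k j * r (x s) k j) +
          T k * ∑ j, x s k j * Real.log (x s k j / x s k i))) s)
    -- at time `t`, the trajectory is outside the trapping region:
    (t : ℝ)
    (ht : (N : ℝ) * δ / (⨅ k, T k) <
      (∑ k, ∑ i, p k i * Real.log (p k i / x t k i)) +
        ∑ k, ∑ i, x t k i * Real.log (x t k i / p k i)) :
    -- then `D_KL(p‖x(·))` is strictly decreasing at `t`:
    ∃ d : ℝ, d < 0 ∧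
      HasDerivAt (fun s => ∑ k, ∑ i, p k i * Real.log (p k i / x s k i)) d t := by
  have : Nonempty (Fin N) := Fin.pos_iff_nonempty.1 hN
  set J := fun k => ∑ i, (x t k i - p k i) * (log (x t k i) - log (p k i))
  set C := fun k => ∑ i, (x t k i - p k i) * (netReward E A (x t) k i - netReward E A p k i)
  have hplayer : ∀ k, ∑ i, (x t k i - p k i) * (r (x t) k i - T k * log (x t k i)) ≤
      δ + C k - T k * J k := fun k =>
    sum_sub_mul_sub_log_le_of_softmax (hT k).ne' (hd k (x t) (p k) (hxS t) (hp k)) (hQRE k)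
      (by rw [(hxS t k).2, (hp k).2])
  have hcross : ∑ k, C k = 0 := sum_sub_mul_netReward_sub_eq_zero hzs (hxS t) hp
  have hweighted : (N : ℝ) * δ < ∑ k, T k * J k := by
    refine lt_sum_mul_of_div_iInf_lt hT (fun k => sum_sub_mul_log_sub_log_nonneg (hpPos k)
      (hxPos t k)) ?_
    rw [← sum_add_distrib] at ht
    exact ht.trans_eq (sum_congr rfl fun k _ => relEntropy_add_relEntropy (hpPos k) (hxPos t k))
  refine ⟨∑ k, ∑ i, (x t k i - p k i) * (r (x t) k i - T k * log (x t k i)), ?_,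
    HasDerivAt.fun_sum fun k _ => hasDerivAt_relEntropy_qLearning (hpPos k) (hp k).2
      (fun s => hxPos s k) (hxS t k).2 (hdyn t k)⟩
  calc _ ≤ ∑ k, (δ + C k - T k * J k) := sum_le_sum fun k _ => hplayer k
    _ = N * δ - ∑ k, T k * J k := by
        simp only [sum_sub_distrib, sum_add_distrib, hcross, sum_const, card_univ,
          Fintype.card_fin, nsmul_eq_mul, add_zero]
    _ < 0 := by linarith

/-- Lemma: Q-learning on a game `G` at MPD distance at most `δ` from a network zero-sum game `Z`
with unique QRE `p` strictly decreases `D_KL(p‖x(t))` whenever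
`Nδ/T_min < D_KL(p‖x(t)) + D_KL(x(t)‖p)`. -/
theorem KL_strictly_decreasing_near_nzsg {N : ℕ} (hN : 0 < N) {n : Fin N → ℕ}
    -- the network zero-sum game `Z`:
    (E : Finset (Fin N × Fin N)) (hE : ∀ k, (k, k) ∉ E)
    (A : ∀ k l : Fin N, Matrix (Fin (n k)) (Fin (n l)) ℝ)
    (hzs : ∀ x : ∀ l, Fin (n l) → ℝ, (∀ l, IsSimplex (x l)) →
      ∑ k, ∑ i, x k i * netReward E A x k i = 0)
    -- the game `G`, given by reward functions depending only on opponents' strategies: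
    (r : (∀ l, Fin (n l) → ℝ) → ∀ k, Fin (n k) → ℝ)
    (hr : ∀ (k : Fin N) (x : ∀ l, Fin (n l) → ℝ) (y : Fin (n k) → ℝ),
      r (update x k y) k = r x k)
    -- `d(Z, G) ≤ δ`:
    (δ : ℝ) (hδ : 0 < δ)
    (hd : ∀ (k : Fin N) (x : ∀ l, Fin (n l) → ℝ) (y : Fin (n k) → ℝ),
      (∀ l, IsSimplex (x l)) → IsSimplex y →
      |(∑ i, y i * netReward E A x k i) - (∑ i, x k i * netReward E A x k i) -
        ((∑ i, y i * r x k i) - (∑ i, x k i * r x k i))| ≤ δ)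
    -- exploration rates:
    (T : Fin N → ℝ) (hT : ∀ k, 0 < T k)
    -- `p` is the unique QRE of `Z`:
    (p : ∀ l, Fin (n l) → ℝ) (hpPos : ∀ k i, 0 < p k i) (hp : ∀ l, IsSimplex (p l))
    (hQRE : ∀ (k : Fin N) (i : Fin (n k)),
      p k i = Real.exp (netReward E A p k i / T k) /
        ∑ j, Real.exp (netReward E A p k j / T k))
    (hUnique : ∀ q : ∀ l, Fin (n l) → ℝ, (∀ l, IsSimplex (q l)) →
      (∀ (k : Fin N) (i : Fin (n k)),
        q k i = Real.exp (netReward E A q k i / T k) /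
          ∑ j, Real.exp (netReward E A q k j / T k)) → q = p)
    -- a trajectory of the Q-learning dynamics on `G`:
    (x : ℝ → ∀ l, Fin (n l) → ℝ)
    (hxPos : ∀ s k i, 0 < x s k i) (hxS : ∀ s l, IsSimplex (x s l))
    (hdyn : ∀ (s : ℝ) (k : Fin N) (i : Fin (n k)),
      HasDerivAt (fun τ => x τ k i)
        (x s k i * (r (x s) k i - (∑ j, x s k j * r (x s) k j) +
          T k * ∑ j, x s k j * Real.log (x s k j / x s k i))) s)
    -- at time `t`, the trajectory is outside the trapping region:
    (t : ℝ)
    (ht : (N : ℝ) * δ / (⨅ k, T k) <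
      (∑ k, ∑ i, p k i * Real.log (p k i / x t k i)) +
        ∑ k, ∑ i, x t k i * Real.log (x t k i / p k i)) :
    -- then `D_KL(p‖x(·))` is strictly decreasing at `t`:
    ∃ d : ℝ, d < 0 ∧
      HasDerivAt (fun s => ∑ k, ∑ i, p k i * Real.log (p k i / x s k i)) d t :=
  KL_strictly_decreasing_near_nzsg_general hN E A hzs r δ hd T hT p hpPos hp hQRE x hxPos hxS hdyn t
    ht
end

section
/- The fixed points of the Q-learning dynamics coincide with Quantal Response Equilibria: an interior point p ∈ Δ satisfies, for all k and i, r_{ki}(p_{-k}) − ⟨p_k, r_k(p)⟩ + T_k Σ_j p_{kj} ln(p_{kj}/p_{ki}) = 0 if and only if p_{ki} = exp(r_{ki}(p_{-k})/T_k)/Σ_j exp(r_{kj}(p_{-k})/T_k) for all k, i. -/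
/-!
Writing `f_i = r_i - T log p_i`, the Q-learning vector field at an interior `p` is
`f_i - ⟨p, f⟩`, so `p` is a rest point iff `f` is constant. A constant `f = c` means
`p_i = exp (r_i / T) · exp (-c / T)`, and `∑ p = 1` forces the common factor to be the
inverse of the partition function `∑ j, exp (r_j / T)`.
-/

open Finset Real

variable {ι : Type*} [Fintype ι]

theorem forall_eq_sum_mul_iff_exists_const {p f : ι → ℝ} (hs : ∑ i, p i = 1) :
    (∀ i, f i = ∑ j, p j * f j) ↔ ∃ c, ∀ i, f i = c := by
  refine ⟨fun h => ⟨_, h⟩, fun ⟨c, hc⟩ i => ?_⟩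
  simp only [hc, ← sum_mul, hs, one_mul]

theorem eq_div_sum_of_eq_mul {p a : ι → ℝ} {s : ℝ} (hs : ∑ i, p i = 1)
    (h : ∀ i, p i = a i * s) (i : ι) : p i = a i / ∑ j, a j := by
  have hsum : (∑ j, a j) * s = 1 := by simp only [sum_mul, ← h, hs]
  rw [h i, div_eq_mul_inv, ← eq_inv_of_mul_eq_one_right hsum]

theorem sum_mul_log_div {p : ι → ℝ} (hp : ∀ i, 0 < p i) (hs : ∑ i, p i = 1) (i : ι) :
    ∑ j, p j * log (p j / p i) = ∑ j, p j * log (p j) - log (p i) := by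
  simp only [log_div (hp _).ne' (hp i).ne', mul_sub, sum_sub_distrib, ← sum_mul, hs, one_mul]

theorem sum_mul_sub_mul_log {p r : ι → ℝ} (T : ℝ) :
    ∑ j, p j * (r j - T * log (p j)) = ∑ j, p j * r j - T * ∑ j, p j * log (p j) := by
  simp only [mul_sub, sum_sub_distrib, mul_left_comm _ T, ← mul_sum]

theorem qld_field_eq_zero_iff {p r : ι → ℝ} (T : ℝ) (hp : ∀ i, 0 < p i)
    (hs : ∑ i, p i = 1) (i : ι) :
    r i - ∑ j, p j * r j + T * ∑ j, p j * log (p j / p i) = 0 ↔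
      r i - T * log (p i) = ∑ j, p j * (r j - T * log (p j)) := by
  rw [sum_mul_log_div hp hs i, sum_mul_sub_mul_log]
  constructor <;> intro h <;> linarith

theorem exists_const_sub_mul_log_iff {p r : ι → ℝ} {T : ℝ} (hp : ∀ i, 0 < p i)
    (hs : ∑ i, p i = 1) (hT : T ≠ 0) :
    (∃ c, ∀ i, r i - T * log (p i) = c) ↔
      ∀ i, p i = exp (r i / T) / ∑ j, exp (r j / T) := by
  constructor
  · rintro ⟨c, hc⟩
    refine eq_div_sum_of_eq_mul (s := exp (-c / T)) hs fun i => ?_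
    have hlog : log (p i) = r i / T + -c / T := by
      field_simp
      linarith [hc i]
    rw [← exp_add, ← hlog, exp_log (hp i)]
  · intro h
    refine ⟨T * log (∑ j, exp (r j / T)), fun i => ?_⟩
    -- otherwise `p i = exp (r i / T) / 0 = 0`
    have hZ : (∑ j, exp (r j / T)) ≠ 0 := fun hZ => by
      simpa [h i, hZ] using hp i
    rw [h i, log_div (exp_pos _).ne' hZ, log_exp]
    field_simp
    ring

/-- The interior fixed points of the Q-learning dynamics coincide with Quantal Response
Equilibria: the vector field vanishes at `p` iff `p` has the Boltzmann/softmax form. -/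
theorem qld_fixed_point_iff_qre {N : ℕ} {n : Fin N → ℕ}
    (r : ∀ k : Fin N, Fin (n k) → ℝ)   -- rewards `r_k(p_{-k})` at the point `p`
    (T : Fin N → ℝ) (hT : ∀ k, 0 < T k)
    (p : ∀ k, Fin (n k) → ℝ)
    (hpPos : ∀ k i, 0 < p k i) (hps : ∀ k, ∑ i, p k i = 1) :
    (∀ (k : Fin N) (i : Fin (n k)),
        r k i - (∑ j, p k j * r k j) +
          T k * ∑ j, p k j * Real.log (p k j / p k i) = 0) ↔
      (∀ (k : Fin N) (i : Fin (n k)),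
        p k i = Real.exp (r k i / T k) / ∑ j, Real.exp (r k j / T k)) := by
  refine forall_congr' fun k => ?_
  rw [← exists_const_sub_mul_log_iff (hpPos k) (hps k) (hT k).ne',
    ← forall_eq_sum_mul_iff_exists_const (hps k)]
  exact forall_congr' (qld_field_eq_zero_iff (T k) (hpPos k) (hps k))
end
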